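/- arXiv:2601.09158 — 2 statements merged into one kernel-verified Lean document; each statement's English description precedes it below -/
import Mathlib

section
/- Let μ ∈ ℝ and λ, α, β > 0. Then the mixed moment mτ under the normal-gamma distribution satisfies ∫_{(0,∞)} ∫_ℝ m·τ · NΓ(m, τ | μ, λ, α, β) dm dτ = μα/β, the integrand being integrable. -/
open MeasureTheory Real

/-- The normal-gamma density `NΓ(m, τ | μ, λ, α, β)` on `ℝ × (0, ∞)`. -/
noncomputable def normalGamma (μ lam α β : ℝ) (m τ : ℝ) : ℝ :=
  (β ^ α * Real.sqrt lam) / (Real.Gamma α * Real.sqrt (2 * Real.pi)) *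
    τ ^ (α - 1 / 2) * Real.exp (-β * τ - lam * τ * (m - μ) ^ 2 / 2)

section Aux

open Set

private lemma intOn_rpow_exp {s r : ℝ} (hs : -1 < s) (hr : 0 < r) :
    IntegrableOn (fun t : ℝ => t ^ s * Real.exp (-r * t)) (Ioi 0) := by
  have h := integrableOn_rpow_mul_exp_neg_mul_rpow hs (one_pos : (0:ℝ) < 1) hr
  simpa only [Real.rpow_one] using h

private lemma integrable_gauss_shift {b : ℝ} (hb : 0 < b) (c : ℝ) :
    Integrable (fun x : ℝ => Real.exp (-b * (x - c) ^ 2)) :=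
  (integrable_exp_neg_mul_sq hb).comp_sub_right c

private lemma integrable_mul_gauss_shift {b : ℝ} (hb : 0 < b) (c : ℝ) :
    Integrable (fun x : ℝ => x * Real.exp (-b * (x - c) ^ 2)) := by
  have h1 : Integrable (fun x : ℝ => (x - c) * Real.exp (-b * (x - c) ^ 2)) :=
    (integrable_mul_exp_neg_mul_sq hb).comp_sub_right c
  have h2 := (integrable_gauss_shift hb c).const_mul c
  refine (h1.add h2).congr (Filter.Eventually.of_forall fun x => ?_)
  simp only [Pi.add_apply]
  ring

private lemma integral_mul_gauss_shift {b : ℝ} (hb : 0 < b) (c : ℝ) :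
    ∫ x : ℝ, x * Real.exp (-b * (x - c) ^ 2) = c * Real.sqrt (π / b) := by
  have h0 : (∫ x : ℝ, x * Real.exp (-b * x ^ 2)) = 0 := by
    have h := integral_neg_eq_self (fun x : ℝ => x * Real.exp (-b * x ^ 2)) volume
    simp only [neg_sq] at h
    have h' : (∫ x : ℝ, -x * Real.exp (-b * x ^ 2))
        = -∫ x : ℝ, x * Real.exp (-b * x ^ 2) := by
      rw [← integral_neg]; congr 1; funext x; ring
    rw [h'] at h
    linarith
  have h1 : Integrable (fun x : ℝ => (x - c) * Real.exp (-b * (x - c) ^ 2)) :=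
    (integrable_mul_exp_neg_mul_sq hb).comp_sub_right c
  have h2 := (integrable_gauss_shift hb c).const_mul c
  calc (∫ x : ℝ, x * Real.exp (-b * (x - c) ^ 2))
      = ∫ x : ℝ, ((x - c) * Real.exp (-b * (x - c) ^ 2)
          + c * Real.exp (-b * (x - c) ^ 2)) := by
        congr 1; funext x; ring
    _ = (∫ x : ℝ, (x - c) * Real.exp (-b * (x - c) ^ 2))
          + ∫ x : ℝ, c * Real.exp (-b * (x - c) ^ 2) := integral_add h1 h2
    _ = c * Real.sqrt (π / b) := by
        rw [integral_sub_right_eq_self (fun x : ℝ => x * Real.exp (-b * x ^ 2)) c, h0,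
          integral_const_mul,
          integral_sub_right_eq_self (fun x : ℝ => Real.exp (-b * x ^ 2)) c,
          integral_gaussian, zero_add]

private lemma integral_abs_mul_gauss {b : ℝ} (hb : 0 < b) :
    ∫ x : ℝ, |x| * Real.exp (-b * x ^ 2) = b⁻¹ := by
  have h : (∫ x : ℝ, |x| * Real.exp (-b * x ^ 2))
      = 2 * ∫ x in Ioi (0 : ℝ), x * Real.exp (-b * x ^ 2) := by
    rw [← integral_comp_abs (f := fun x : ℝ => x * Real.exp (-b * x ^ 2))]
    congr 1; funext x; rw [sq_abs]
  have h2 : (∫ x in Ioi (0 : ℝ), x * Real.exp (-b * x ^ 2))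
      = b ^ (-(1 + 1) / 2 : ℝ) * (1 / 2) * Real.Gamma ((1 + 1) / 2) := by
    rw [← integral_rpow_mul_exp_neg_mul_rpow (by norm_num : (0:ℝ) < 2)
      (by norm_num : (-1:ℝ) < 1) hb]
    refine setIntegral_congr_fun measurableSet_Ioi fun x hx => ?_
    rw [Real.rpow_one, Real.rpow_two]
  rw [h, h2]
  have e1 : (-(1 + 1) / 2 : ℝ) = -1 := by norm_num
  have e2 : ((1 + 1) / 2 : ℝ) = 1 := by norm_num
  rw [e1, e2, Real.rpow_neg_one, Real.Gamma_one]
  ring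

private lemma integral_abs_mul_gauss_shift_le {b : ℝ} (hb : 0 < b) (c : ℝ) :
    ∫ x : ℝ, |x| * Real.exp (-b * (x - c) ^ 2) ≤ b⁻¹ + |c| * Real.sqrt (π / b) := by
  have hI : Integrable (fun x : ℝ => |x| * Real.exp (-b * (x - c) ^ 2)) := by
    refine (integrable_mul_gauss_shift hb c).abs.congr
      (Filter.Eventually.of_forall fun x => ?_)
    simp only [abs_mul, abs_of_pos (Real.exp_pos _)]
  have h1 : Integrable (fun x : ℝ => |x - c| * Real.exp (-b * (x - c) ^ 2)) := by
    refine ((integrable_mul_exp_neg_mul_sq hb).abs.comp_sub_right c).congr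
      (Filter.Eventually.of_forall fun x => ?_)
    simp only [abs_mul, abs_of_pos (Real.exp_pos _)]
  have h2 := h1.add ((integrable_gauss_shift hb c).const_mul |c|)
  calc (∫ x : ℝ, |x| * Real.exp (-b * (x - c) ^ 2))
      ≤ ∫ x : ℝ, (|x - c| * Real.exp (-b * (x - c) ^ 2)
          + |c| * Real.exp (-b * (x - c) ^ 2)) := by
        refine integral_mono hI h2 fun x => ?_
        have habs : |x| ≤ |x - c| + |c| := by
          calc |x| = |(x - c) + c| := by ring_nf
          _ ≤ |x - c| + |c| := abs_add_le _ _
        have := mul_le_mul_of_nonneg_right habs (Real.exp_pos (-b * (x - c) ^ 2)).le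
        nlinarith
    _ = (∫ x : ℝ, |x - c| * Real.exp (-b * (x - c) ^ 2))
          + ∫ x : ℝ, |c| * Real.exp (-b * (x - c) ^ 2) :=
        integral_add h1 ((integrable_gauss_shift hb c).const_mul |c|)
    _ = b⁻¹ + |c| * Real.sqrt (π / b) := by
        rw [integral_sub_right_eq_self (fun x : ℝ => |x| * Real.exp (-b * x ^ 2)) c,
          integral_abs_mul_gauss hb, integral_const_mul,
          integral_sub_right_eq_self (fun x : ℝ => Real.exp (-b * x ^ 2)) c,
          integral_gaussian]

private lemma f_eq (μ lam α β τ : ℝ) :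
    (fun m : ℝ => m * τ * normalGamma μ lam α β m τ)
      = fun m : ℝ => ((β ^ α * Real.sqrt lam) / (Real.Gamma α * Real.sqrt (2 * π)) *
          τ ^ (α - 1 / 2) * τ * Real.exp (-β * τ)) *
          (m * Real.exp (-(lam * τ / 2) * (m - μ) ^ 2)) := by
  funext m
  unfold normalGamma
  rw [show -β * τ - lam * τ * (m - μ) ^ 2 / 2
      = (-β * τ) + (-(lam * τ / 2) * (m - μ) ^ 2) by ring, Real.exp_add]
  ring

private lemma tau_alg {α τ : ℝ} (hτ : 0 < τ) :
    τ ^ (α - 1 / 2) * τ = τ ^ α * Real.sqrt τ := by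
  rw [show (α - 1 / 2 : ℝ) = α + 1 / 2 - 1 by ring, Real.rpow_sub hτ, Real.rpow_one,
    div_mul_cancel₀ _ (ne_of_gt hτ), Real.rpow_add hτ, Real.sqrt_eq_rpow]

private lemma inner_integral {μ lam α β : ℝ} (hlam : 0 < lam) (hα : 0 < α) (hβ : 0 < β)
    {τ : ℝ} (hτ : 0 < τ) :
    (∫ m : ℝ, m * τ * normalGamma μ lam α β m τ)
      = (μ * β ^ α / Real.Gamma α) * (τ ^ α * Real.exp (-β * τ)) := by
  have hb : (0 : ℝ) < lam * τ / 2 := by positivity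
  have hΓ : (0 : ℝ) < Real.Gamma α := Real.Gamma_pos_of_pos hα
  rw [f_eq, integral_const_mul, integral_mul_gauss_shift hb μ]
  rw [show π / (lam * τ / 2) = (2 * π) / lam / τ by field_simp]
  rw [Real.sqrt_div (by positivity) τ, Real.sqrt_div (by positivity) lam]
  have h2π : (0 : ℝ) < Real.sqrt (2 * π) := Real.sqrt_pos.mpr (by positivity)
  have hsl : (0 : ℝ) < Real.sqrt lam := Real.sqrt_pos.mpr hlam
  have hst : (0 : ℝ) < Real.sqrt τ := Real.sqrt_pos.mpr hτ
  have hA : τ ^ (α - 1 / 2) = τ ^ α * Real.sqrt τ / τ :=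
    (eq_div_iff hτ.ne').mpr (tau_alg hτ)
  rw [hA]
  field_simp

end Aux

/-- Mixed moment of `m·τ` under the normal-gamma distribution: `E[mτ] = μα/β`. -/
theorem normalGamma_moment_m_tau (μ lam α β : ℝ) (hlam : 0 < lam) (hα : 0 < α) (hβ : 0 < β) :
    IntegrableOn (fun p : ℝ × ℝ => p.1 * p.2 * normalGamma μ lam α β p.1 p.2)
      (Set.univ ×ˢ Set.Ioi (0 : ℝ)) volume ∧
    (∫ τ in Set.Ioi (0 : ℝ), ∫ m, m * τ * normalGamma μ lam α β m τ) = μ * α / β := by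
  have hΓ : (0 : ℝ) < Real.Gamma α := Real.Gamma_pos_of_pos hα
  have h2π : (0 : ℝ) < Real.sqrt (2 * π) := Real.sqrt_pos.mpr (by positivity)
  have hsl : (0 : ℝ) < Real.sqrt lam := Real.sqrt_pos.mpr hlam
  set C : ℝ := (β ^ α * Real.sqrt lam) / (Real.Gamma α * Real.sqrt (2 * π)) with hC
  have hCpos : 0 < C := by
    rw [hC]
    exact div_pos (mul_pos (Real.rpow_pos_of_pos hβ α) hsl) (mul_pos hΓ h2π)
  -- measurability of the integrand on the product space
  have hmeas : AEStronglyMeasurable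
      (fun p : ℝ × ℝ => p.1 * p.2 * normalGamma μ lam α β p.1 p.2)
      ((volume : Measure ℝ).prod (volume.restrict (Set.Ioi 0))) := by
    apply Measurable.aestronglyMeasurable
    unfold normalGamma
    fun_prop
  -- a.e. integrability in m
  have cond1 : ∀ᵐ τ ∂(volume.restrict (Set.Ioi (0:ℝ))),
      Integrable (fun m : ℝ => m * τ * normalGamma μ lam α β m τ) := by
    filter_upwards [self_mem_ae_restrict measurableSet_Ioi] with τ hτ
    have hτ' : (0 : ℝ) < τ := hτ
    have hb : (0 : ℝ) < lam * τ / 2 := by positivity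
    rw [f_eq]
    exact (integrable_mul_gauss_shift hb μ).const_mul _
  -- integrability of the integral of the norm
  have cond2 : Integrable (fun τ : ℝ => ∫ m : ℝ, ‖m * τ * normalGamma μ lam α β m τ‖)
      (volume.restrict (Set.Ioi (0:ℝ))) := by
    set c1 : ℝ := C * (2 / lam) with hc1
    set c2 : ℝ := C * |μ| * Real.sqrt (2 * π / lam) with hc2
    have hG : IntegrableOn (fun τ : ℝ =>
        c1 * (τ ^ (α - 1/2) * Real.exp (-β * τ)) + c2 * (τ ^ α * Real.exp (-β * τ)))
        (Set.Ioi 0) volume :=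
      ((intOn_rpow_exp (by linarith) hβ).const_mul c1).add
        ((intOn_rpow_exp (by linarith) hβ).const_mul c2)
    refine Integrable.mono hG ?_ ?_
    · exact hmeas.norm.prod_swap.integral_prod_right'
    · filter_upwards [self_mem_ae_restrict measurableSet_Ioi] with τ hτ
      have hτ' : (0 : ℝ) < τ := hτ
      have hb : (0 : ℝ) < lam * τ / 2 := by positivity
      have hK : (0 : ℝ) ≤ C * τ ^ (α - 1/2) * τ * Real.exp (-β * τ) := by positivity
      have hnorm : ∀ m : ℝ, ‖m * τ * normalGamma μ lam α β m τ‖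
          = (C * τ ^ (α - 1/2) * τ * Real.exp (-β * τ))
            * (|m| * Real.exp (-(lam * τ / 2) * (m - μ) ^ 2)) := by
        intro m
        have := congrFun (f_eq μ lam α β τ) m
        rw [Real.norm_eq_abs, this, abs_mul, abs_of_nonneg hK, abs_mul,
          abs_of_pos (Real.exp_pos _)]
      have hle : (∫ m : ℝ, ‖m * τ * normalGamma μ lam α β m τ‖)
          ≤ c1 * (τ ^ (α - 1/2) * Real.exp (-β * τ)) + c2 * (τ ^ α * Real.exp (-β * τ)) := by
        calc (∫ m : ℝ, ‖m * τ * normalGamma μ lam α β m τ‖)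
            = (C * τ ^ (α - 1/2) * τ * Real.exp (-β * τ))
              * ∫ m : ℝ, |m| * Real.exp (-(lam * τ / 2) * (m - μ) ^ 2) := by
              rw [← integral_const_mul]; exact integral_congr_ae
                (Filter.Eventually.of_forall fun m => hnorm m)
          _ ≤ (C * τ ^ (α - 1/2) * τ * Real.exp (-β * τ))
              * ((lam * τ / 2)⁻¹ + |μ| * Real.sqrt (π / (lam * τ / 2))) :=
              mul_le_mul_of_nonneg_left (integral_abs_mul_gauss_shift_le hb μ) hK
          _ = c1 * (τ ^ (α - 1/2) * Real.exp (-β * τ)) + c2 * (τ ^ α * Real.exp (-β * τ)) := by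
              rw [show π / (lam * τ / 2) = (2 * π / lam) / τ by field_simp,
                Real.sqrt_div (by positivity) τ, hc1, hc2]
              have hst : (0 : ℝ) < Real.sqrt τ := Real.sqrt_pos.mpr hτ'
              have hA : τ ^ (α - 1 / 2) = τ ^ α * Real.sqrt τ / τ :=
                (eq_div_iff hτ'.ne').mpr (tau_alg hτ')
              rw [hA]
              field_simp
      have h0 : (0 : ℝ) ≤ ∫ m : ℝ, ‖m * τ * normalGamma μ lam α β m τ‖ :=
        integral_nonneg fun m => norm_nonneg _
      have hGnn : (0 : ℝ) ≤ c1 * (τ ^ (α - 1/2) * Real.exp (-β * τ))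
          + c2 * (τ ^ α * Real.exp (-β * τ)) := le_trans h0 hle
      rw [Real.norm_eq_abs, Real.norm_eq_abs, abs_of_nonneg h0, abs_of_nonneg hGnn]
      exact hle
  have hrestr : (volume : Measure (ℝ × ℝ)).restrict (Set.univ ×ˢ Set.Ioi (0:ℝ))
      = (volume : Measure ℝ).prod (volume.restrict (Set.Ioi 0)) := by
    rw [Measure.volume_eq_prod, ← Measure.prod_restrict, Measure.restrict_univ]
  constructor
  · have h : Integrable (fun p : ℝ × ℝ => p.1 * p.2 * normalGamma μ lam α β p.1 p.2)
        ((volume : Measure ℝ).prod (volume.restrict (Set.Ioi 0))) :=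
      (integrable_prod_iff' hmeas).mpr ⟨cond1, cond2⟩
    unfold IntegrableOn
    rw [hrestr]
    exact h
  · rw [setIntegral_congr_fun measurableSet_Ioi
      (fun τ hτ => inner_integral hlam hα hβ (Set.mem_Ioi.mp hτ)), integral_const_mul]
    have hout : (∫ τ in Set.Ioi (0:ℝ), τ ^ α * Real.exp (-β * τ))
        = (1 / β) ^ (α + 1) * Real.Gamma (α + 1) := by
      rw [← Real.integral_rpow_mul_exp_neg_mul_Ioi (by linarith : (0:ℝ) < α + 1) hβ]
      refine setIntegral_congr_fun measurableSet_Ioi fun t ht => ?_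
      rw [add_sub_cancel_right, neg_mul]
    rw [hout, Real.Gamma_add_one (ne_of_gt hα), one_div, Real.inv_rpow hβ.le]
    have hβα : β ^ (α + 1) = β ^ α * β := by rw [Real.rpow_add hβ, Real.rpow_one]
    have hβαpos : (0 : ℝ) < β ^ α := Real.rpow_pos_of_pos hβ α
    rw [hβα]
    field_simp
end

section
/- Let μ ∈ ℝ and λ, α, β > 0. Then the mixed moment m²τ under the normal-gamma distribution satisfies ∫_{(0,∞)} ∫_ℝ m²·τ · NΓ(m, τ | μ, λ, α, β) dm dτ = 1/λ + μ²α/β, the integrand being integrable. -/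
open MeasureTheory Real

open Set in
lemma aux_odd_integral (b : ℝ) : ∫ x : ℝ, x * Real.exp (-b * x ^ 2) = 0 := by
  simp only [neg_mul]
  have h := integral_neg_eq_self (fun x : ℝ => x * Real.exp (-(b * x ^ 2)))
    (volume : Measure ℝ)
  simp only [neg_sq, neg_mul] at h
  rw [integral_neg] at h
  linarith

open Set in
lemma aux_sq_integral {b : ℝ} (hb : 0 < b) :
    ∫ x : ℝ, x ^ 2 * Real.exp (-b * x ^ 2) = 1 / (2 * b) * Real.sqrt (π / b) := by
  have hcast : ∀ x : ℝ, x ^ (2 : ℝ) = x ^ 2 := fun x => by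
    rw [show (2 : ℝ) = ((2 : ℕ) : ℝ) by norm_num, Real.rpow_natCast]
  have h2 := integral_rpow_mul_exp_neg_mul_rpow (p := 2) (q := 2)
    (by norm_num) (by norm_num) hb
  simp_rw [hcast] at h2
  have h1 : ∫ x : ℝ, x ^ 2 * Real.exp (-b * x ^ 2)
      = 2 * ∫ x in Ioi (0 : ℝ), x ^ 2 * Real.exp (-b * x ^ 2) := by
    rw [← integral_comp_abs (f := fun x => x ^ 2 * Real.exp (-b * x ^ 2))]
    congr 1
    ext x
    rw [sq_abs]
  have hG : Real.Gamma ((2 + 1) / 2) = Real.sqrt π / 2 := by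
    rw [show ((2 + 1) / 2 : ℝ) = 1 / 2 + 1 by norm_num,
      Real.Gamma_add_one (by norm_num), Real.Gamma_one_half_eq]
    ring
  rw [h1, h2, hG]
  have hs : Real.sqrt (π / b) = Real.sqrt π / Real.sqrt b := Real.sqrt_div pi_pos.le b
  have hbr : b ^ (-(2 + 1) / 2 : ℝ) = (b * Real.sqrt b)⁻¹ := by
    rw [show (-(2 + 1) / 2 : ℝ) = -(1 + 1 / 2) by norm_num, Real.rpow_neg hb.le,
      Real.rpow_add hb, Real.rpow_one, ← Real.sqrt_eq_rpow]
  rw [hbr, hs]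
  have h1 : Real.sqrt b ≠ 0 := (Real.sqrt_pos.2 hb).ne'
  field_simp

lemma aux_gauss_moment {b : ℝ} (hb : 0 < b) (μ : ℝ) :
    (Integrable fun m : ℝ => m ^ 2 * Real.exp (-b * (m - μ) ^ 2)) ∧
    (∫ m : ℝ, m ^ 2 * Real.exp (-b * (m - μ) ^ 2))
      = (μ ^ 2 + 1 / (2 * b)) * Real.sqrt (π / b) := by
  have hcast : ∀ x : ℝ, x ^ (2 : ℝ) = x ^ 2 := fun x => by
    rw [show (2 : ℝ) = ((2 : ℕ) : ℝ) by norm_num, Real.rpow_natCast]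
  have hg1 : Integrable fun x : ℝ => x ^ 2 * Real.exp (-b * x ^ 2) := by
    have := integrable_rpow_mul_exp_neg_mul_sq hb (s := 2) (by norm_num)
    simpa [hcast] using this
  have hg2 := integrable_mul_exp_neg_mul_sq hb
  have hg3 := integrable_exp_neg_mul_sq hb
  have hg23 : Integrable (fun x : ℝ => 2 * μ * (x * Real.exp (-b * x ^ 2)) +
      μ ^ 2 * Real.exp (-b * x ^ 2)) volume := (hg2.const_mul _).add (hg3.const_mul _)
  have hsum : Integrable fun x : ℝ => (x + μ) ^ 2 * Real.exp (-b * x ^ 2) := by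
    have heq : (fun x : ℝ => (x + μ) ^ 2 * Real.exp (-b * x ^ 2))
        = fun x => x ^ 2 * Real.exp (-b * x ^ 2) +
            ((2 * μ) * (x * Real.exp (-b * x ^ 2)) + μ ^ 2 * Real.exp (-b * x ^ 2)) := by
      funext x; ring
    rw [heq]
    exact hg1.add ((hg2.const_mul _).add (hg3.const_mul _))
  have hint : Integrable fun m : ℝ => m ^ 2 * Real.exp (-b * (m - μ) ^ 2) := by
    have := hsum.comp_sub_right μ
    simpa using this
  refine ⟨hint, ?_⟩
  have hshift : (∫ m : ℝ, m ^ 2 * Real.exp (-b * (m - μ) ^ 2))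
      = ∫ x : ℝ, (x + μ) ^ 2 * Real.exp (-b * x ^ 2) := by
    rw [← integral_add_right_eq_self
      (fun m : ℝ => m ^ 2 * Real.exp (-b * (m - μ) ^ 2)) μ]
    simp
  rw [hshift]
  have heq : (fun x : ℝ => (x + μ) ^ 2 * Real.exp (-b * x ^ 2))
      = fun x => x ^ 2 * Real.exp (-b * x ^ 2) +
          ((2 * μ) * (x * Real.exp (-b * x ^ 2)) + μ ^ 2 * Real.exp (-b * x ^ 2)) := by
    funext x; ring
  have i1 := integral_add (μ := volume) (hg2.const_mul (2 * μ)) (hg3.const_mul (μ ^ 2))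
  have i2 := integral_add (μ := volume) hg1 hg23
  rw [heq, i2, i1, integral_const_mul, integral_const_mul, aux_sq_integral hb,
    aux_odd_integral b, integral_gaussian b]
  ring

/-- Mixed moment of `m²·τ` under the normal-gamma distribution:
`E[m²τ] = 1/λ + μ²α/β`. -/
theorem normalGamma_moment_m_sq_tau (μ lam α β : ℝ) (hlam : 0 < lam) (hα : 0 < α)
    (hβ : 0 < β) :
    IntegrableOn (fun p : ℝ × ℝ => p.1 ^ 2 * p.2 * normalGamma μ lam α β p.1 p.2)
      (Set.univ ×ˢ Set.Ioi (0 : ℝ)) volume ∧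
    (∫ τ in Set.Ioi (0 : ℝ), ∫ m, m ^ 2 * τ * normalGamma μ lam α β m τ) =
      1 / lam + μ ^ 2 * α / β := by
  obtain ⟨C, hC⟩ : ∃ C : ℝ,
      C = β ^ α * Real.sqrt lam / (Real.Gamma α * Real.sqrt (2 * π)) := ⟨_, rfl⟩
  obtain ⟨c1, hc1⟩ : ∃ c : ℝ,
      c = C * (Real.sqrt (2 * π) / Real.sqrt lam) * μ ^ 2 := ⟨_, rfl⟩
  obtain ⟨c2, hc2⟩ : ∃ c : ℝ,
      c = C * (Real.sqrt (2 * π) / Real.sqrt lam) * (1 / lam) := ⟨_, rfl⟩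
  have hπ2 : (0 : ℝ) < 2 * π := by positivity
  have hsl : Real.sqrt lam ≠ 0 := (Real.sqrt_pos.2 hlam).ne'
  have hsπ : Real.sqrt (2 * π) ≠ 0 := (Real.sqrt_pos.2 hπ2).ne'
  have hG : Real.Gamma α ≠ 0 := (Real.Gamma_pos_of_pos hα).ne'
  -- factorization of the integrand
  have hfac : ∀ τ m : ℝ, m ^ 2 * τ * normalGamma μ lam α β m τ
      = (C * τ ^ (α - 1 / 2) * Real.exp (-(β * τ)) * τ) *
        (m ^ 2 * Real.exp (-(lam * τ / 2) * (m - μ) ^ 2)) := by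
    intro τ m
    unfold normalGamma
    rw [show -β * τ - lam * τ * (m - μ) ^ 2 / 2
        = -(β * τ) + -(lam * τ / 2) * (m - μ) ^ 2 by ring, Real.exp_add, hC]
    ring
  -- inner integral computation for τ > 0
  have key : ∀ τ ∈ Set.Ioi (0 : ℝ),
      (∫ m, m ^ 2 * τ * normalGamma μ lam α β m τ)
        = c1 * (τ ^ α * Real.exp (-(β * τ))) + c2 * (τ ^ (α - 1) * Real.exp (-(β * τ))) := by
    intro τ hτ
    rw [Set.mem_Ioi] at hτ
    have hb : 0 < lam * τ / 2 := by positivity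
    have hst : Real.sqrt τ ≠ 0 := (Real.sqrt_pos.2 hτ).ne'
    have hrw : (fun m : ℝ => m ^ 2 * τ * normalGamma μ lam α β m τ)
        = fun m => (C * τ ^ (α - 1 / 2) * Real.exp (-(β * τ)) * τ) *
          (m ^ 2 * Real.exp (-(lam * τ / 2) * (m - μ) ^ 2)) := funext (hfac τ)
    rw [hrw, integral_const_mul, (aux_gauss_moment hb μ).2]
    have hsq : Real.sqrt (π / (lam * τ / 2))
        = Real.sqrt (2 * π) / (Real.sqrt lam * Real.sqrt τ) := by
      rw [show π / (lam * τ / 2) = (2 * π) / (lam * τ) by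
        field_simp, Real.sqrt_div hπ2.le, Real.sqrt_mul hlam.le]
    have e1 : τ ^ (α - 1 / 2 : ℝ) = τ ^ α * Real.sqrt τ / τ := by
      rw [show (α - 1 / 2 : ℝ) = α + 1 / 2 - 1 by ring, Real.rpow_sub hτ,
        Real.rpow_add hτ, Real.rpow_one, ← Real.sqrt_eq_rpow]
    have e2 : τ ^ (α - 1 : ℝ) = τ ^ α / τ := by
      rw [Real.rpow_sub hτ, Real.rpow_one]
    rw [hsq, e1, e2, hc1, hc2, hC]
    have hτ0 : τ ≠ 0 := hτ.ne'
    generalize hs2 : Real.sqrt (2 * π) = s2 at hsπ ⊢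
    generalize τ ^ (α : ℝ) = A
    generalize Real.exp (-(β * τ)) = E
    field_simp
  -- integrability of the two Gamma-type pieces
  have hcastone : ∀ x : ℝ, x ∈ Set.Ioi (0:ℝ) → x ^ (1 : ℝ) = x := fun x _ => Real.rpow_one x
  have hInt1 : IntegrableOn (fun τ : ℝ => τ ^ α * Real.exp (-(β * τ))) (Set.Ioi 0) := by
    have := integrableOn_rpow_mul_exp_neg_mul_rpow (p := 1) (s := α)
      (by linarith) zero_lt_one hβ
    refine this.congr_fun ?_ measurableSet_Ioi
    intro x hx
    simp [Real.rpow_one]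
  have hInt2 : IntegrableOn (fun τ : ℝ => τ ^ (α - 1) * Real.exp (-(β * τ))) (Set.Ioi 0) := by
    have := integrableOn_rpow_mul_exp_neg_mul_rpow (p := 1) (s := α - 1)
      (by linarith) zero_lt_one hβ
    refine this.congr_fun ?_ measurableSet_Ioi
    intro x hx
    simp [Real.rpow_one]
  -- values of the Gamma-type integrals
  have hI1 : ∫ τ in Set.Ioi (0 : ℝ), τ ^ α * Real.exp (-(β * τ))
      = (1 / β) ^ (α + 1) * Real.Gamma (α + 1) := by
    have := Real.integral_rpow_mul_exp_neg_mul_Ioi (a := α + 1) (r := β)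
      (by linarith) hβ
    simpa using this
  have hI2 : ∫ τ in Set.Ioi (0 : ℝ), τ ^ (α - 1) * Real.exp (-(β * τ))
      = (1 / β) ^ α * Real.Gamma α := by
    have := Real.integral_rpow_mul_exp_neg_mul_Ioi (a := α) (r := β) hα hβ
    simpa using this
  -- nonnegativity
  have hNG : ∀ {τ : ℝ}, 0 < τ → ∀ m : ℝ,
      0 ≤ m ^ 2 * τ * normalGamma μ lam α β m τ := by
    intro τ hτ m
    unfold normalGamma
    positivity
  -- measurability
  have hmeas : Measurable fun p : ℝ × ℝ =>
      p.1 ^ 2 * p.2 * normalGamma μ lam α β p.1 p.2 := by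
    unfold normalGamma
    fun_prop
  constructor
  · -- integrability
    have hprod : (volume : Measure (ℝ × ℝ)).restrict (Set.univ ×ˢ Set.Ioi 0)
        = (volume : Measure ℝ).prod ((volume : Measure ℝ).restrict (Set.Ioi 0)) := by
      rw [Measure.volume_eq_prod, ← Measure.prod_restrict, Measure.restrict_univ]
    rw [IntegrableOn, hprod]
    rw [integrable_prod_iff' hmeas.aestronglyMeasurable]
    constructor
    · filter_upwards [ae_restrict_mem measurableSet_Ioi] with τ hτ
      rw [Set.mem_Ioi] at hτ
      have hb : 0 < lam * τ / 2 := by positivity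
      have hrw : (fun m : ℝ => m ^ 2 * τ * normalGamma μ lam α β m τ)
          = fun m => (C * τ ^ (α - 1 / 2) * Real.exp (-(β * τ)) * τ) *
            (m ^ 2 * Real.exp (-(lam * τ / 2) * (m - μ) ^ 2)) := funext (hfac τ)
      simpa [hrw] using ((aux_gauss_moment hb μ).1.const_mul
        (C * τ ^ (α - 1 / 2) * Real.exp (-(β * τ)) * τ))
    · refine (((hInt1.const_mul c1).add (hInt2.const_mul c2)).congr ?_)
      filter_upwards [ae_restrict_mem measurableSet_Ioi] with τ hτ
      have hτ' : 0 < τ := hτ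
      have hnorm : ∀ m : ℝ, ‖m ^ 2 * τ * normalGamma μ lam α β m τ‖
          = m ^ 2 * τ * normalGamma μ lam α β m τ := fun m =>
        Real.norm_of_nonneg (hNG hτ' m)
      calc c1 * (τ ^ α * Real.exp (-(β * τ))) + c2 * (τ ^ (α - 1) * Real.exp (-(β * τ)))
          = ∫ m, m ^ 2 * τ * normalGamma μ lam α β m τ := (key τ hτ).symm
        _ = ∫ m, ‖m ^ 2 * τ * normalGamma μ lam α β m τ‖ := by simp_rw [hnorm]
  · -- value
    rw [setIntegral_congr_fun measurableSet_Ioi key,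
      integral_add (hInt1.const_mul c1) (hInt2.const_mul c2),
      integral_const_mul, integral_const_mul, hI1, hI2]
    have hβα : (1 / β : ℝ) ^ α = (β ^ α)⁻¹ := by
      rw [one_div]; exact Real.inv_rpow hβ.le α
    have hβα' : (0 : ℝ) < β ^ α := Real.rpow_pos_of_pos hβ α
    rw [Real.rpow_add (by positivity : (0:ℝ) < 1 / β), Real.rpow_one,
      Real.Gamma_add_one hα.ne', hβα, hc1, hc2, hC]
    generalize hX : (β : ℝ) ^ α = X at hβα' ⊢
    generalize hs2 : Real.sqrt (2 * π) = s2 at hsπ ⊢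
    have hX0 : X ≠ 0 := hβα'.ne'
    field_simp
    ring
end
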